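/- arXiv:1307.2729 — 2 statements merged into one kernel-verified Lean document; each statement's English description precedes it below -/
import Mathlib

section
/- There exists a constant C₀ > 0 depending only on the integer n ≥ 3 with the following property. Let (X,d) be a compact metric space equipped with a finite Borel measure μ such that: (i) for every x ∈ X, μ(B(x,ρ))/ρⁿ → ω_n as ρ → 0⁺; (ii) for every x ∈ X the function ρ ↦ μ(B(x,ρ)) is continuous on (0,∞); (iii) X is geodesic, i.e. for all a,b ∈ X there exists γ : [0, d(a,b)] → X with γ(0) = a, γ(d(a,b)) = b and d(γ(s), γ(t)) = |s − t| for all s,t ∈ [0, d(a,b)]; (iv) there are constants A > 0, B ≥ 0 and a measurable function R : X → [0,∞) such that the (A,B,R)-Sobolev inequality holds at every x ∈ X up to scale 1. Then diam(X) ≤ C₀ (A + B + 1)^{n/2} (1 + μ(X) + ∫_X R^{(n−1)/2} dμ). -/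
/-!
Testing the Sobolev inequality at `x` against the tent `v_{x,s}` shows: if the volume ratio
`μ(B(x,r))/rⁿ` is at least a small `m = m(n, A+B+1)` at `r = s/2` and the curvature integral
`∫_{B(x,s)} R^{(n-1)/2}` is at most `m s`, then the ratio is still above `m` at `r = s`.
Otherwise the left side of the inequality is `≥ (m (s/2)ⁿ)^{(n-2)/n} (s/2)²`, while the right
side is `≲ m sⁿ` (Hölder bounds `∫ R v²` by `s² (m s)^{2/(n-1)} (m sⁿ)^{1-2/(n-1)} = m sⁿ`), and
since `m` is small, `m^{(n-2)/n}` beats `m` by the factor `2^{n+4}(A+B+1)`.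

The ratio is close to `ω_n > m` at tiny scales, so following dyadic scales up to `1/2` gives a
radius `r ≤ 1/2` with `μ(B(x,r)) + ∫_{B(x,r)} R^{(n-1)/2} ≥ 2⁻ⁿ m r`. Along a unit-speed
geodesic from `a` to `b`, Vitali's lemma selects disjoint such balls whose radii add up to at
least `d(a,b)/8`, whence `d(a,b) ≤ 2^{n+3} m⁻¹ (μ(X) + ∫ R^{(n-1)/2})`.
-/

open MeasureTheory Metric Set Filter

/-- The Lebesgue volume of the unit ball in `ℝⁿ`. -/
noncomputable def unitBallVol (n : ℕ) : ℝ :=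
  (volume (Metric.ball (0 : EuclideanSpace ℝ (Fin n)) 1)).toReal

/-- The `(A,B,R)`-Sobolev inequality holds at `x` up to scale `r`:
for every `s ∈ (0,r]`, testing with the cutoff `v_{x,s}(y) = max (s - d(x,y)) 0`,
`(∫ v^{2n/(n-2)})^{(n-2)/n} ≤ A (4 μ(B(x,s)) + ∫ R v²) + B ∫ v²`. -/
noncomputable def SobolevAt {X : Type*} [MetricSpace X] [MeasurableSpace X]
    (μ : Measure X) (n : ℕ) (A B : ℝ) (R : X → ℝ) (x : X) (r : ℝ) : Prop :=
  ∀ s ∈ Set.Ioc (0 : ℝ) r,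
    (∫⁻ y, ENNReal.ofReal (max (s - dist x y) 0) ^ ((2 * (n : ℝ)) / ((n : ℝ) - 2)) ∂μ)
        ^ (((n : ℝ) - 2) / (n : ℝ))
      ≤ ENNReal.ofReal A * (4 * μ (Metric.ball x s)
            + ∫⁻ y, ENNReal.ofReal (R y)
                * ENNReal.ofReal (max (s - dist x y) 0) ^ (2 : ℝ) ∂μ)
        + ENNReal.ofReal B * ∫⁻ y, ENNReal.ofReal (max (s - dist x y) 0) ^ (2 : ℝ) ∂μ

open scoped ENNReal NNReal Topology

theorem lintegral_le_lintegral_rpow_mul_measure_univ {α : Type*} [MeasurableSpace α]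
    (μ : Measure α) {f : α → ℝ≥0∞} (hf : AEMeasurable f μ) {q : ℝ} (hq : 1 ≤ q) :
    ∫⁻ a, f a ∂μ ≤ (∫⁻ a, f a ^ q ∂μ) ^ (1 / q) * μ univ ^ (1 - 1 / q) := by
  simpa [eLpNorm'_eq_lintegral_enorm] using
    eLpNorm'_le_eLpNorm'_mul_rpow_measure_univ one_pos hq hf.aestronglyMeasurable (μ := μ)

theorem exists_countable_pairwiseDisjoint_ball_ofReal_le_tsum (L r₀ : ℝ) (r : ℝ → ℝ)
    (hr : ∀ t, 0 < r t) (hr₀ : ∀ t, r t ≤ r₀) :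
    ∃ u ⊆ Icc 0 L, u.Countable ∧ (u.PairwiseDisjoint fun t => ball t (r t)) ∧
      ENNReal.ofReal L ≤ ∑' t : u, ENNReal.ofReal (8 * r t) := by
  obtain ⟨u, huL, hdisj, hcov⟩ := Vitali.exists_disjoint_subfamily_covering_enlargement_ball
    (Icc 0 L) id r r₀ (fun t _ => hr₀ t) 4 (by norm_num)
  have hu : u.Countable :=
    hdisj.countable_of_isOpen (fun _ _ => isOpen_ball) fun t _ => nonempty_ball.2 (hr t)
  refine ⟨u, huL, hu, hdisj, ?_⟩
  have hsub : Icc 0 L ⊆ ⋃ t ∈ u, ball t (4 * r t) := fun a ha => by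
    obtain ⟨b, hb, hab⟩ := hcov a ha
    exact mem_biUnion hb (hab (mem_ball_self (hr a)))
  calc ENNReal.ofReal L = volume (Icc 0 L) := by rw [Real.volume_Icc, sub_zero]
    _ ≤ ∑' t : u, volume (ball (t : ℝ) (4 * r t)) :=
      (measure_mono hsub).trans (measure_biUnion_le volume hu _)
    _ = ∑' t : u, ENNReal.ofReal (8 * r t) := by
      simp only [Real.volume_ball, ← mul_assoc]; norm_num

theorem ofReal_le_mul_measure_univ_of_isometryOn {X : Type*} [MetricSpace X] [MeasurableSpace X]
    [OpensMeasurableSpace X] (ν : Measure X) {κ r₀ : ℝ} (hκ : 0 < κ) (r : X → ℝ)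
    (hr : ∀ z, 0 < r z) (hr₀ : ∀ z, r z ≤ r₀)
    (hν : ∀ z, ENNReal.ofReal (κ * r z) ≤ ν (ball z (r z)))
    {L : ℝ} {γ : ℝ → X} (hγ : ∀ s ∈ Icc 0 L, ∀ t ∈ Icc 0 L, dist (γ s) (γ t) = |s - t|) :
    ENNReal.ofReal L ≤ ENNReal.ofReal (8 / κ) * ν univ := by
  obtain ⟨u, huL, hu, hdisj, hL⟩ := exists_countable_pairwiseDisjoint_ball_ofReal_le_tsum L r₀
    (fun t => r (γ t)) (fun _ => hr _) (fun _ => hr₀ _)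
  have hdisjX : u.PairwiseDisjoint fun t => ball (γ t) (r (γ t)) := fun p hp q hq hpq =>
    ball_disjoint_ball <| by
      rw [hγ p (huL hp) q (huL hq), ← Real.dist_eq]
      exact (disjoint_ball_ball_iff (hr _) (hr _)).1 (hdisj hp hq hpq)
  calc ENNReal.ofReal L ≤ ∑' t : u, ENNReal.ofReal (8 / κ) * ENNReal.ofReal (κ * r (γ t)) := by
        refine hL.trans_eq (tsum_congr fun t => ?_)
        rw [← ENNReal.ofReal_mul (by positivity)]
        congr 1
        field_simp
    _ ≤ ENNReal.ofReal (8 / κ) * ∑' t : u, ν (ball (γ t) (r (γ t))) := by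
        rw [ENNReal.tsum_mul_left]
        exact mul_le_mul_right (ENNReal.tsum_le_tsum fun t => hν _) _
    _ ≤ ENNReal.ofReal (8 / κ) * ν univ := by
        rw [← measure_biUnion hu hdisjX fun _ _ => measurableSet_ball]
        exact mul_le_mul_right (measure_mono (subset_univ _)) _

theorem mul_mul_pow_le_sq_mul_rpow {n : ℕ} (hn : 2 ≤ n) {M m t : ℝ} (hm : 0 < m) (ht : 0 ≤ t)
    (hkey : M * m ≤ m ^ (((n : ℝ) - 2) / n)) :
    M * m * t ^ n ≤ t ^ 2 * (m * t ^ n) ^ (((n : ℝ) - 2) / n) := by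
  have hpow : (t ^ n) ^ (((n : ℝ) - 2) / n) = t ^ (n - 2) := by
    rw [← Real.rpow_natCast_mul ht, ← Real.rpow_natCast, Nat.cast_sub hn]
    congr 1
    have : (n : ℝ) ≠ 0 := by positivity
    field_simp
    push_cast
    ring
  rw [Real.mul_rpow hm.le (by positivity), hpow, mul_left_comm, ← pow_add,
    Nat.add_sub_cancel' hn]
  gcongr

theorem sq_mul_rpow_mul_rpow_eq {n : ℕ} (hn : 2 ≤ n) {m s : ℝ} (hm : 0 < m) (hs : 0 < s) :
    s ^ 2 * ((m * s) ^ (2 / ((n : ℝ) - 1)) * (m * s ^ n) ^ (1 - 2 / ((n : ℝ) - 1)))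
      = m * s ^ n := by
  set i := 2 / ((n : ℝ) - 1) with hi
  have hsplit : s ^ 2 * ((m * s) ^ i * (m * s ^ n) ^ (1 - i))
      = m ^ (i + (1 - i)) * s ^ ((2 : ℝ) + i + n * (1 - i)) := by
    rw [Real.mul_rpow hm.le hs.le, Real.mul_rpow hm.le (by positivity), ← Real.rpow_natCast s n,
      ← Real.rpow_mul hs.le, Real.rpow_add hm, Real.rpow_add hs, Real.rpow_add hs, Real.rpow_two]
    ring
  have hn1 : (n : ℝ) - 1 ≠ 0 := by
    have : (2 : ℝ) ≤ n := by exact_mod_cast hn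
    linarith
  have hexp : (2 : ℝ) + i + n * (1 - i) = n := by
    rw [hi]
    field_simp
    ring
  rw [hsplit, hexp, add_sub_cancel, Real.rpow_one, Real.rpow_natCast]

/-- The test function `v_{x,s}` of `SobolevAt`. -/
noncomputable def tent {X : Type*} [MetricSpace X] (x : X) (s : ℝ) (y : X) : ℝ≥0∞ :=
  ENNReal.ofReal (max (s - dist x y) 0)

section Tent

variable {X : Type*} [MetricSpace X] [MeasurableSpace X] [OpensMeasurableSpace X]
  (μ : Measure X) (x : X) {s : ℝ}

theorem ofReal_le_lintegral_tent_rpow {p : ℝ} (hp : 0 ≤ p) :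
    ENNReal.ofReal (s / 2) ^ p * μ (ball x (s / 2)) ≤ ∫⁻ y, tent x s y ^ p ∂μ := by
  rw [← setLIntegral_const]
  refine (setLIntegral_mono' measurableSet_ball fun y hy => ?_).trans
    (setLIntegral_le_lintegral _ _)
  rw [mem_ball'] at hy
  exact ENNReal.rpow_le_rpow (ENNReal.ofReal_le_ofReal (le_max_of_le_left (by linarith))) hp

theorem lintegral_mul_tent_sq_le (f : X → ℝ≥0∞) :
    ∫⁻ y, f y * tent x s y ^ 2 ∂μ ≤ ENNReal.ofReal s ^ 2 * ∫⁻ y in ball x s, f y ∂μ := by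
  rw [← lintegral_indicator measurableSet_ball, ← lintegral_const_mul' _ _ (by simp)]
  refine lintegral_mono fun y => ?_
  by_cases hy : y ∈ ball x s
  · rw [indicator_of_mem hy, mul_comm]
    gcongr
    have hs : 0 ≤ s := dist_nonneg.trans (mem_ball'.1 hy).le
    exact ENNReal.ofReal_le_ofReal (max_le (by linarith [dist_nonneg (x := x) (y := y)]) hs)
  · rw [mem_ball', not_lt] at hy
    simp [tent, max_eq_right (sub_nonpos.2 hy)]

theorem lintegral_tent_sq_le_measure_ball (hs : s ≤ 1) :
    ∫⁻ y, tent x s y ^ 2 ∂μ ≤ μ (ball x s) := calc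
  ∫⁻ y, tent x s y ^ 2 ∂μ ≤ ENNReal.ofReal s ^ 2 * μ (ball x s) := by
    simpa using lintegral_mul_tent_sq_le μ x (fun _ => 1)
  _ ≤ μ (ball x s) :=
    mul_le_of_le_one_left (by positivity)
      (pow_le_one₀ (by positivity) (ENNReal.ofReal_le_one.2 hs))

theorem ofReal_mul_le_lintegral_tent_rpow_rpow {n : ℕ} (hn : 3 ≤ n) {m M : ℝ} (hm : 0 < m)
    (hs : 0 ≤ s) (hkey : M * m ≤ m ^ (((n : ℝ) - 2) / n))
    (hhalf : ENNReal.ofReal (m * (s / 2) ^ n) ≤ μ (ball x (s / 2))) :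
    ENNReal.ofReal (M * m * (s / 2) ^ n)
      ≤ (∫⁻ y, tent x s y ^ (2 * (n : ℝ) / ((n : ℝ) - 2)) ∂μ) ^ (((n : ℝ) - 2) / n) := by
  have hn' : (3 : ℝ) ≤ n := by exact_mod_cast hn
  set p := 2 * (n : ℝ) / ((n : ℝ) - 2)
  set θ := ((n : ℝ) - 2) / n
  have hθ : 0 ≤ θ := div_nonneg (by linarith) (by linarith)
  have hpθ : p * θ = 2 := by
    have h2 : (n : ℝ) - 2 ≠ 0 := by linarith
    have h0 : (n : ℝ) ≠ 0 := by linarith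
    simp only [p, θ]
    field_simp
  calc ENNReal.ofReal (M * m * (s / 2) ^ n)
      ≤ ENNReal.ofReal ((s / 2) ^ 2 * (m * (s / 2) ^ n) ^ θ) :=
        ENNReal.ofReal_le_ofReal (mul_mul_pow_le_sq_mul_rpow (by omega) hm (by positivity) hkey)
    _ = (ENNReal.ofReal (s / 2) ^ p) ^ θ * ENNReal.ofReal (m * (s / 2) ^ n) ^ θ := by
      rw [ENNReal.ofReal_mul (by positivity), ← ENNReal.ofReal_rpow_of_nonneg (by positivity) hθ,
        ← ENNReal.rpow_mul, hpθ, ENNReal.rpow_two, ENNReal.ofReal_pow (by positivity)]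
    _ ≤ (ENNReal.ofReal (s / 2) ^ p * μ (ball x (s / 2))) ^ θ := by
      rw [ENNReal.mul_rpow_of_nonneg _ _ hθ]
      gcongr
    _ ≤ (∫⁻ y, tent x s y ^ p ∂μ) ^ θ := by
      gcongr
      exact ofReal_le_lintegral_tent_rpow μ x (div_nonneg (by linarith) (by linarith))

theorem lintegral_ofReal_mul_tent_sq_le {n : ℕ} (hn : 3 ≤ n) {m : ℝ} (hm : 0 < m) {R : X → ℝ}
    (hR : Measurable R) (hs : 0 < s) (hV : μ (ball x s) ≤ ENNReal.ofReal (m * s ^ n))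
    (hRs : ∫⁻ y in ball x s, ENNReal.ofReal (R y) ^ (((n : ℝ) - 1) / 2) ∂μ
      ≤ ENNReal.ofReal (m * s)) :
    ∫⁻ y, ENNReal.ofReal (R y) * tent x s y ^ 2 ∂μ ≤ ENNReal.ofReal (m * s ^ n) := by
  have hn' : (3 : ℝ) ≤ n := by exact_mod_cast hn
  have hi0 : 0 ≤ 2 / ((n : ℝ) - 1) := div_nonneg zero_le_two (by linarith)
  have hi1 : 2 / ((n : ℝ) - 1) ≤ 1 := (div_le_one (by linarith)).2 (by linarith)
  have hq : 1 ≤ ((n : ℝ) - 1) / 2 := by linarith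
  calc ∫⁻ y, ENNReal.ofReal (R y) * tent x s y ^ 2 ∂μ
      ≤ ENNReal.ofReal s ^ 2 * ∫⁻ y in ball x s, ENNReal.ofReal (R y) ∂μ :=
        lintegral_mul_tent_sq_le μ x _
    _ ≤ ENNReal.ofReal s ^ 2 * (ENNReal.ofReal (m * s) ^ (2 / ((n : ℝ) - 1))
          * ENNReal.ofReal (m * s ^ n) ^ (1 - 2 / ((n : ℝ) - 1))) := by
      gcongr
      refine (lintegral_le_lintegral_rpow_mul_measure_univ _ hR.ennreal_ofReal.aemeasurable
        hq).trans ?_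
      rw [Measure.restrict_apply_univ, one_div_div]
      gcongr
    _ = ENNReal.ofReal (m * s ^ n) := by
      rw [ENNReal.ofReal_rpow_of_nonneg (by positivity) hi0,
        ENNReal.ofReal_rpow_of_nonneg (by positivity) (by linarith), ← ENNReal.ofReal_pow hs.le,
        ← ENNReal.ofReal_mul (by positivity), ← ENNReal.ofReal_mul (by positivity),
        sq_mul_rpow_mul_rpow_eq (by omega) hm hs]

end Tent

theorem SobolevAt.ofReal_lt_measure_ball {X : Type*} [MetricSpace X] [MeasurableSpace X]
    [OpensMeasurableSpace X] {μ : Measure X} {n : ℕ} {A B : ℝ} {R : X → ℝ} {x : X}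
    (hsob : SobolevAt μ n A B R x 1) (hn : 3 ≤ n) (hA : 0 ≤ A) (hB : 0 ≤ B)
    (hR : Measurable R) {m s : ℝ} (hm : 0 < m)
    (hkey : 2 ^ (n + 4) * (A + B + 1) * m ≤ m ^ (((n : ℝ) - 2) / n)) (hs : s ∈ Ioc 0 1)
    (hhalf : ENNReal.ofReal (m * (s / 2) ^ n) ≤ μ (ball x (s / 2)))
    (hRs : ∫⁻ y in ball x s, ENNReal.ofReal (R y) ^ (((n : ℝ) - 1) / 2) ∂μ
      ≤ ENNReal.ofReal (m * s)) :
    ENNReal.ofReal (m * s ^ n) < μ (ball x s) := by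
  by_contra! hV
  have hsob_s := hsob s hs
  simp only [ENNReal.rpow_two] at hsob_s
  obtain ⟨hs0, hs1⟩ := hs
  set M := ENNReal.ofReal (m * s ^ n)
  have h : ENNReal.ofReal (16 * (A + B + 1) * (m * s ^ n))
      ≤ ENNReal.ofReal ((5 * A + B) * (m * s ^ n)) := calc
    _ = ENNReal.ofReal (2 ^ (n + 4) * (A + B + 1) * m * (s / 2) ^ n) := by
      congr 1
      rw [div_pow, pow_add]
      field_simp
      norm_num
    _ ≤ _ := ofReal_mul_le_lintegral_tent_rpow_rpow μ x hn hm hs0.le hkey hhalf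
    _ ≤ _ := hsob_s
    _ ≤ ENNReal.ofReal A * (4 * M + M) + ENNReal.ofReal B * M := by
      gcongr
      · exact lintegral_ofReal_mul_tent_sq_le μ x hn hm hR hs0 hV hRs
      · exact (lintegral_tent_sq_le_measure_ball μ x hs1).trans hV
    _ = ENNReal.ofReal ((5 * A + B) * (m * s ^ n)) := by
      rw [ENNReal.ofReal_mul (by positivity), ENNReal.ofReal_add (by positivity) hB,
        ENNReal.ofReal_mul (by norm_num), ENNReal.ofReal_ofNat]
      ring
  rw [ENNReal.ofReal_le_ofReal_iff (by positivity)] at h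
  nlinarith [show 0 < m * s ^ n by positivity]

theorem eventually_ofReal_pow_le_measure_ball {X : Type*} [MetricSpace X] [MeasurableSpace X]
    {μ : Measure X} {n : ℕ} {x : X} {ω m : ℝ} (hm : m < ω)
    (hdens : Tendsto (fun ρ : ℝ => (μ (ball x ρ)).toReal / ρ ^ n) (𝓝[>] 0) (𝓝 ω)) :
    ∀ᶠ k : ℕ in atTop, ENNReal.ofReal (m * ((1 / 2) ^ k) ^ n) ≤ μ (ball x ((1 / 2) ^ k)) := by
  have hρ : Tendsto (fun k : ℕ => ((1 : ℝ) / 2) ^ k) atTop (𝓝[>] 0) :=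
    tendsto_pow_atTop_nhdsWithin_zero_of_lt_one (by norm_num) (by norm_num)
  filter_upwards [(hdens.comp hρ).eventually (eventually_gt_nhds hm)] with k hk
  exact ENNReal.ofReal_le_of_le_toReal ((lt_div_iff₀ (by positivity)).1 hk).le

section Radius

variable {X : Type*} [MetricSpace X] [MeasurableSpace X] [OpensMeasurableSpace X]
  {μ : Measure X} {n : ℕ} {A B : ℝ} {R : X → ℝ} {x : X}

theorem SobolevAt.exists_radius_ofReal_le_measure_ball_add_lintegral
    (hsob : SobolevAt μ n A B R x 1) (hn : 3 ≤ n) (hA : 0 ≤ A) (hB : 0 ≤ B) (hR : Measurable R)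
    (hdens : Tendsto (fun ρ : ℝ => (μ (ball x ρ)).toReal / ρ ^ n) (𝓝[>] 0) (𝓝 (unitBallVol n)))
    {m : ℝ} (hm : 0 < m) (hmω : m < unitBallVol n)
    (hkey : 2 ^ (n + 4) * (A + B + 1) * m ≤ m ^ (((n : ℝ) - 2) / n)) :
    ∃ r ∈ Ioc (0 : ℝ) (1 / 2), ENNReal.ofReal (m / 2 ^ n * r)
      ≤ μ (ball x r) + ∫⁻ y in ball x r, ENNReal.ofReal (R y) ^ (((n : ℝ) - 1) / 2) ∂μ := by
  by_contra! hsmall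
  -- `P k`: the volume ratio at scale `2^{-(k+1)}` is at least `m`. It fails for `k = 0` and holds
  -- for large `k`, so it fails at some scale `s` and holds at `s / 2`.
  set P : ℕ → Prop := fun k =>
    ENNReal.ofReal (m * ((1 / 2) ^ (k + 1)) ^ n) ≤ μ (ball x ((1 / 2) ^ (k + 1)))
  have hP0 : ¬ P 0 := fun h => by
    simp only [P, zero_add, pow_one] at h
    have := h.trans_lt (le_self_add.trans_lt (hsmall (1 / 2) ⟨by norm_num, le_rfl⟩))
    rw [ENNReal.ofReal_lt_ofReal_iff (by positivity)] at this
    rw [one_div_pow, mul_one_div] at this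
    linarith [show 0 < m / 2 ^ n by positivity]
  have hP : ∃ k, P k := by
    obtain ⟨k, hk⟩ := (eventually_ofReal_pow_le_measure_ball hmω hdens).exists_forall_of_atTop
    exact ⟨k, hk (k + 1) k.le_succ⟩
  obtain ⟨k, hk, hk1⟩ := Nat.exists_not_and_succ_of_not_zero_of_exists hP0 hP
  set s : ℝ := (1 / 2) ^ (k + 1)
  have hs : s ∈ Ioc 0 1 := ⟨by positivity, pow_le_one₀ (by norm_num) (by norm_num)⟩
  have hhalf : s / 2 = (1 / 2) ^ (k + 1 + 1) := by rw [pow_succ _ (k + 1)]; ring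
  refine hk (hsob.ofReal_lt_measure_ball hn hA hB hR hm hkey hs ?_ ?_).le
  · rw [hhalf]; exact hk1
  · refine le_add_self.trans (hsmall s ⟨hs.1, ?_⟩).le |>.trans (ENNReal.ofReal_le_ofReal ?_)
    · exact pow_le_of_le_one (by norm_num) (by norm_num) k.succ_ne_zero
    · exact mul_le_mul_of_nonneg_right (div_le_self hm.le (one_le_pow₀ (by norm_num))) hs.1.le

end Radius

theorem unitBallVol_pos (n : ℕ) : 0 < unitBallVol n :=
  ENNReal.toReal_pos (measure_ball_pos _ _ one_pos).ne' measure_ball_lt_top.ne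

theorem mul_mul_rpow_neg_half_le_rpow {c M d : ℝ} (hc0 : 0 < c) (hc1 : c ≤ 1) (hM : 0 < M)
    (hd : 0 < d) : M * (c * M ^ (-(d / 2))) ≤ (c * M ^ (-(d / 2))) ^ ((d - 2) / d) := by
  set m := c * M ^ (-(d / 2))
  have hm : 0 < m := by positivity
  have hexp : (d - 2) / d = 1 + -(2 / d) := by field_simp; ring
  have hneg : m ^ (-(2 / d)) = c ^ (-(2 / d)) * M := by
    rw [Real.mul_rpow hc0.le (by positivity), ← Real.rpow_mul hM.le]
    congr
    rw [show -(d / 2) * -(2 / d) = 1 by field_simp, Real.rpow_one]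
  have hc : 1 ≤ c ^ (-(2 / d)) :=
    Real.one_le_rpow_of_pos_of_le_one_of_nonpos hc0 hc1 (by have := div_pos two_pos hd; linarith)
  rw [hexp, Real.rpow_add hm, Real.rpow_one, hneg, mul_comm M]
  gcongr
  nlinarith

noncomputable def noncollapsingConst (n : ℕ) (K : ℝ) : ℝ :=
  min 1 (unitBallVol n / 2) * (2 ^ (n + 4) * K) ^ (-((n : ℝ) / 2))

section noncollapsingConst

variable {n : ℕ} {K : ℝ}

theorem noncollapsingConst_pos (hK : 0 < K) : 0 < noncollapsingConst n K :=
  mul_pos (lt_min one_pos (half_pos (unitBallVol_pos n))) (by positivity)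

theorem noncollapsingConst_lt_unitBallVol (hK : 1 ≤ K) :
    noncollapsingConst n K < unitBallVol n := by
  have hω := unitBallVol_pos n
  calc noncollapsingConst n K ≤ unitBallVol n / 2 * 1 := by
        refine mul_le_mul (min_le_right _ _) ?_ (by positivity) (by positivity)
        exact Real.rpow_le_one_of_one_le_of_nonpos
          (one_le_mul_of_one_le_of_one_le (one_le_pow₀ (by norm_num)) hK)
          (neg_nonpos.2 (by positivity))
    _ < unitBallVol n := by linarith

theorem mul_noncollapsingConst_le_rpow (hn : 0 < n) (hK : 0 < K) :
    2 ^ (n + 4) * K * noncollapsingConst n K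
      ≤ noncollapsingConst n K ^ (((n : ℝ) - 2) / n) :=
  mul_mul_rpow_neg_half_le_rpow (lt_min one_pos (half_pos (unitBallVol_pos n))) (min_le_left _ _)
    (by positivity) (by exact_mod_cast hn)

theorem div_noncollapsingConst_eq (hK : 0 < K) :
    8 / (noncollapsingConst n K / 2 ^ n)
      = 2 ^ (n + 3) * (2 ^ (n + 4)) ^ ((n : ℝ) / 2) / min 1 (unitBallVol n / 2)
        * K ^ ((n : ℝ) / 2) := by
  have hc : 0 < min 1 (unitBallVol n / 2) := lt_min one_pos (half_pos (unitBallVol_pos n))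
  rw [noncollapsingConst, Real.rpow_neg (by positivity), Real.mul_rpow (by positivity) hK.le]
  field_simp
  ring

end noncollapsingConst

/-- Diameter upper bound: there is `C₀ = C₀(n) > 0` such that for any compact metric
measure space satisfying the density, continuity, geodesic and Sobolev assumptions,
`diam(X) ≤ C₀ (A+B+1)^{n/2} (1 + μ(X) + ∫ R^{(n-1)/2})`. -/
theorem diameter_upper_bound (n : ℕ) (hn : 3 ≤ n) :
    ∃ C₀ : ℝ, 0 < C₀ ∧
      ∀ (X : Type) [MetricSpace X] [CompactSpace X] [MeasurableSpace X] [BorelSpace X]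
        (μ : Measure X) [IsFiniteMeasure μ] (A B : ℝ) (R : X → ℝ),
        (∀ x : X, Tendsto (fun ρ : ℝ => (μ (Metric.ball x ρ)).toReal / ρ ^ n)
            (nhdsWithin 0 (Set.Ioi 0)) (nhds (unitBallVol n))) →
        (∀ x : X, ContinuousOn (fun ρ : ℝ => (μ (Metric.ball x ρ)).toReal)
            (Set.Ioi (0 : ℝ))) →
        (∀ a b : X, ∃ γ : ℝ → X, γ 0 = a ∧ γ (dist a b) = b ∧
            ∀ s ∈ Set.Icc (0 : ℝ) (dist a b), ∀ t ∈ Set.Icc (0 : ℝ) (dist a b),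
              dist (γ s) (γ t) = |s - t|) →
        0 < A → 0 ≤ B → Measurable R → (∀ y, 0 ≤ R y) →
        (∀ x : X, SobolevAt μ n A B R x 1) →
        ENNReal.ofReal (Metric.diam (Set.univ : Set X))
          ≤ ENNReal.ofReal (C₀ * (A + B + 1) ^ ((n : ℝ) / 2)) *
              (1 + μ Set.univ
                + ∫⁻ y, ENNReal.ofReal (R y) ^ (((n : ℝ) - 1) / 2) ∂μ) := by
  have hc : 0 < min 1 (unitBallVol n / 2) := lt_min one_pos (half_pos (unitBallVol_pos n))
  refine ⟨2 ^ (n + 3) * (2 ^ (n + 4)) ^ ((n : ℝ) / 2) / min 1 (unitBallVol n / 2),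
    by positivity, ?_⟩
  intro X _ _ _ _ μ _ A B R hdens _ hgeo hA hB hR _ hsob
  have hK : 1 ≤ A + B + 1 := by linarith
  set m := noncollapsingConst n (A + B + 1)
  have hm : 0 < m := noncollapsingConst_pos (by linarith)
  set ν := μ + μ.withDensity fun y => ENNReal.ofReal (R y) ^ (((n : ℝ) - 1) / 2)
  choose r hr hrμ using fun x => (hsob x).exists_radius_ofReal_le_measure_ball_add_lintegral hn
    hA.le hB hR (hdens x) hm (noncollapsingConst_lt_unitBallVol hK)
    (mul_noncollapsingConst_le_rpow (by omega) (by linarith))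
  have hrν z : ENNReal.ofReal (m / 2 ^ n * r z) ≤ ν (ball z (r z)) := by
    rw [Measure.add_apply, withDensity_apply _ measurableSet_ball]
    exact hrμ z
  have hdist (a b : X) : edist a b ≤ ENNReal.ofReal (8 / (m / 2 ^ n)) * ν univ := by
    obtain ⟨γ, -, -, hγ⟩ := hgeo a b
    rw [edist_dist]
    exact ofReal_le_mul_measure_univ_of_isometryOn ν (by positivity) r (fun z => (hr z).1)
      (fun z => (hr z).2) hrν hγ
  calc ENNReal.ofReal (diam univ) ≤ ediam (univ : Set X) := ENNReal.ofReal_toReal_le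
    _ ≤ ENNReal.ofReal (8 / (m / 2 ^ n)) * ν univ := ediam_le fun a _ b _ => hdist a b
    _ ≤ _ := by
      rw [div_noncollapsingConst_eq (by linarith), Measure.add_apply,
        withDensity_apply _ MeasurableSet.univ, Measure.restrict_univ, add_assoc]
      gcongr
      exact le_add_self
end

section
/- Let θ ∈ (0,1), c > 0, r > 0, and let W : (0,r] → (0,∞) be a function such that W(s) ≥ c · W(s/2)^θ for every s ∈ (0,r], and such that W(s) converges to a finite positive limit as s → 0⁺. Then W(r) ≥ c^{1/(1−θ)}. -/
/-! Along the dyadic scales `r / 2 ^ m`, iterating the hypothesis gives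
`W r ≥ c ^ (1 + θ + ⋯ + θ ^ (m - 1)) * W (r / 2 ^ m) ^ (θ ^ m)`. The exponent of `c` tends to
`1 / (1 - θ)`, and `W (r / 2 ^ m) ^ (θ ^ m) → L ^ 0 = 1` because the limit `L` is nonzero. -/

open Set Filter Topology Finset

section IteratedPowerBound

variable {θ c : ℝ} {a : ℕ → ℝ}

theorem rpow_geom_sum_mul_rpow_le_of_mul_rpow_succ_le (hc : 0 < c) (hθ : 0 ≤ θ)
    (ha : ∀ n, 0 ≤ a n) (hrec : ∀ n, c * a (n + 1) ^ θ ≤ a n) (m : ℕ) :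
    c ^ (∑ i ∈ range m, θ ^ i) * a m ^ (θ ^ m) ≤ a 0 := by
  induction m with
  | zero => simp
  | succ m ih =>
    have hstep : c ^ (θ ^ m) * a (m + 1) ^ (θ ^ (m + 1)) ≤ a m ^ (θ ^ m) := by
      calc c ^ (θ ^ m) * a (m + 1) ^ (θ ^ (m + 1))
          = (c * a (m + 1) ^ θ) ^ (θ ^ m) := by
            rw [Real.mul_rpow hc.le (Real.rpow_nonneg (ha _) θ), ← Real.rpow_mul (ha _),
              mul_comm θ, ← pow_succ]
        _ ≤ a m ^ (θ ^ m) :=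
            Real.rpow_le_rpow (mul_nonneg hc.le (Real.rpow_nonneg (ha _) θ)) (hrec m)
              (pow_nonneg hθ m)
    calc c ^ (∑ i ∈ range (m + 1), θ ^ i) * a (m + 1) ^ (θ ^ (m + 1))
        = c ^ (∑ i ∈ range m, θ ^ i) * (c ^ (θ ^ m) * a (m + 1) ^ (θ ^ (m + 1))) := by
          rw [sum_range_succ, Real.rpow_add hc, mul_assoc]
      _ ≤ c ^ (∑ i ∈ range m, θ ^ i) * a m ^ (θ ^ m) := by gcongr
      _ ≤ a 0 := ih

theorem tendsto_rpow_geom_sum_mul_rpow (hc : 0 < c) (hθ₀ : 0 ≤ θ) (hθ₁ : θ < 1) {L : ℝ}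
    (hL : L ≠ 0) (ha : Tendsto a atTop (𝓝 L)) :
    Tendsto (fun m ↦ c ^ (∑ i ∈ range m, θ ^ i) * a m ^ (θ ^ m)) atTop
      (𝓝 (c ^ (1 / (1 - θ)))) := by
  have hsum : Tendsto (fun m ↦ ∑ i ∈ range m, θ ^ i) atTop (𝓝 (1 / (1 - θ))) := by
    simpa only [one_div] using (hasSum_geometric_of_lt_one hθ₀ hθ₁).tendsto_sum_nat
  have hpow : Tendsto (fun m ↦ a m ^ (θ ^ m)) atTop (𝓝 1) := by
    simpa only [Real.rpow_zero] using
      ha.rpow (tendsto_pow_atTop_nhds_zero_of_lt_one hθ₀ hθ₁) (Or.inl hL)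
  simpa only [mul_one] using
    (tendsto_const_nhds.rpow hsum (Or.inl hc.ne')).mul hpow

theorem rpow_one_div_one_sub_le_of_mul_rpow_succ_le (hc : 0 < c) (hθ₀ : 0 ≤ θ) (hθ₁ : θ < 1)
    (ha : ∀ n, 0 ≤ a n) (hrec : ∀ n, c * a (n + 1) ^ θ ≤ a n) {L : ℝ} (hL : L ≠ 0)
    (hlim : Tendsto a atTop (𝓝 L)) :
    c ^ (1 / (1 - θ)) ≤ a 0 :=
  le_of_tendsto' (tendsto_rpow_geom_sum_mul_rpow hc hθ₀ hθ₁ hL hlim)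
    (rpow_geom_sum_mul_rpow_le_of_mul_rpow_succ_le hc hθ₀ ha hrec)

end IteratedPowerBound

theorem div_two_pow_mem_Ioc {r : ℝ} (hr : 0 < r) (m : ℕ) : r / 2 ^ m ∈ Ioc 0 r :=
  ⟨by positivity, div_le_self hr.le (one_le_pow₀ one_le_two)⟩

theorem tendsto_div_two_pow_nhdsGT_zero {r : ℝ} (hr : 0 < r) :
    Tendsto (fun m : ℕ ↦ r / 2 ^ m) atTop (𝓝[>] 0) := by
  refine tendsto_nhdsWithin_of_tendsto_nhds_of_eventually_within _ ?_
    (Eventually.of_forall fun m ↦ (div_two_pow_mem_Ioc hr m).1)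
  simpa only [div_eq_mul_inv, ← inv_pow, mul_zero] using
    (tendsto_pow_atTop_nhds_zero_of_lt_one (by norm_num) (by norm_num)).const_mul r

/-- Iteration lemma: if `W : (0,r] → (0,∞)` satisfies `W(s) ≥ c W(s/2)^θ` for all
`s ∈ (0,r]` and `W` has a finite positive limit at `0⁺`, then `W(r) ≥ c^{1/(1-θ)}`. -/
theorem iteration_lemma (θ c r : ℝ) (hθ : θ ∈ Set.Ioo (0 : ℝ) 1) (hc : 0 < c)
    (hr : 0 < r) (W : ℝ → ℝ)
    (hWpos : ∀ s ∈ Set.Ioc (0 : ℝ) r, 0 < W s)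
    (hWiter : ∀ s ∈ Set.Ioc (0 : ℝ) r, W s ≥ c * W (s / 2) ^ θ)
    (hWlim : ∃ L : ℝ, 0 < L ∧ Tendsto W (nhdsWithin 0 (Set.Ioi 0)) (nhds L)) :
    W r ≥ c ^ (1 / (1 - θ)) := by
  obtain ⟨L, hL, hWL⟩ := hWlim
  have hrec (n : ℕ) : c * W (r / 2 ^ (n + 1)) ^ θ ≤ W (r / 2 ^ n) := by
    simpa only [pow_succ, div_div] using hWiter _ (div_two_pow_mem_Ioc hr n)
  simpa only [pow_zero, div_one, ge_iff_le] using rpow_one_div_one_sub_le_of_mul_rpow_succ_le hc hθ.1.le hθ.2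
    (fun n ↦ (hWpos _ (div_two_pow_mem_Ioc hr n)).le) hrec hL.ne'
    (hWL.comp (tendsto_div_two_pow_nhdsGT_zero hr))
end
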